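/- arXiv:1409.6980 — 3 statements merged into one kernel-verified Lean document; each statement's English description precedes it below -/
import Mathlib

section
/- Let (X, dist) be a compact metric space and Φ : ℝ × X → X a continuous flow (Φ(0,x) = x, Φ(t+s,x) = Φ(t,Φ(s,x))). Let C > 1 satisfy dist(Φ(τ,x),Φ(τ,y)) ≤ C·dist(x,y) for all |τ| ≤ 1 and x, y ∈ X. Assume the time-one map f = Φ(1,·) has the weighted shadowing property with weight C: there exist L₀ > 0 and d₀ > 0 such that for every 0 < d ≤ d₀ and every sequence (x_k)_{k≥0} in X with Σ_{k≥0} C^k·dist(x_{k+1}, f(x_k)) ≤ d there exists q ∈ X with Σ_{k≥0} C^k·dist(x_k, f^k(q)) ≤ L₀·d. Then there exists L > 0 such that for every 0 < d ≤ d₀ and every function Ψ : ℝ_{≥0} → X with ψ(t) ≤ d for all t ≥ 0 and Σ_{k≥0} C^k·ψ(k) ≤ d, where ψ(t) := sup_{|τ|≤1, t+τ≥0} dist(Ψ(t+τ), Φ(τ,Ψ(t))), there exists a point p ∈ X such that the Lebesgue upper integral ∫₀^∞ C^t·dist(Φ(t,p), Ψ(t)) dt is at most L·d. -/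
open MeasureTheory

/-- The Lebesgue upper integral of a (possibly non-measurable) nonnegative-valued error
function `f` over a set `s`: the infimum of `∫⁻ g` over measurable majorants `g`. -/
noncomputable def upperIntegral (f : ℝ → ℝ) (s : Set ℝ) : ENNReal :=
  ⨅ (g : ℝ → ENNReal) (_ : Measurable g) (_ : ∀ x ∈ s, ENNReal.ofReal (f x) ≤ g x),
    ∫⁻ x in s, g x

/-- The error function `ψ(t) = sup_{|τ|≤1, t+τ≥0} dist(Ψ(t+τ), Φ(τ,Ψ(t)))` of a
pseudotrajectory `Ψ` of the flow `Φ`. -/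
noncomputable def errFn {X : Type*} [MetricSpace X] (Φ : ℝ → X → X) (Ψ : ℝ → X) (t : ℝ) : ℝ :=
  ⨆ τ : {τ : ℝ // |τ| ≤ 1 ∧ 0 ≤ t + τ}, dist (Ψ (t + τ)) (Φ τ (Ψ t))

/-! The orbit of the point `q` that discrete weighted shadowing provides for the sequence
`Ψ(k)` shadows `Ψ`: this sequence is a weighted pseudotrajectory of `Φ 1` because
`dist (Ψ (k + 1)) (Φ 1 (Ψ k)) ≤ ψ(k)`. For `t ∈ [k, k + 1)` one has
`dist (Φ t q) (Ψ t) ≤ C · dist (Ψ k) ((Φ 1)^[k] q) + ψ(k)` and `C ^ t ≤ C ^ (k + 1)`, so the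
integrand is dominated by a step function with integral
`C² · ∑ C ^ k dist (Ψ k) ((Φ 1)^[k] q) + C · ∑ C ^ k ψ(k) ≤ (C² L₀ + C) d`. -/

open Set ENNReal

theorem upperIntegral_le_setLIntegral {f : ℝ → ℝ} {s : Set ℝ} {g : ℝ → ℝ≥0∞}
    (hg : Measurable g) (hfg : ∀ x ∈ s, ENNReal.ofReal (f x) ≤ g x) :
    upperIntegral f s ≤ ∫⁻ x in s, g x :=
  iInf₂_le_of_le g hg (iInf_le _ hfg)

theorem Ico_natCast_eq_Ici_inter_floor_preimage (k : ℕ) :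
    Ico (k : ℝ) (k + 1) = Ici 0 ∩ Nat.floor ⁻¹' {k} := by
  ext t
  simp only [mem_Ico, mem_inter_iff, mem_Ici, mem_preimage, mem_singleton_iff]
  constructor
  · rintro ⟨hkt, htk⟩
    have ht : 0 ≤ t := k.cast_nonneg.trans hkt
    exact ⟨ht, (Nat.floor_eq_iff ht).2 ⟨hkt, htk⟩⟩
  · rintro ⟨ht, hk⟩
    exact (Nat.floor_eq_iff ht).1 hk

theorem setLIntegral_Ici_comp_natFloor (a : ℕ → ℝ≥0∞) :
    ∫⁻ t in Ici (0 : ℝ), a ⌊t⌋₊ = ∑' k, a k := by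
  have hcover : Ici (0 : ℝ) = ⋃ k : ℕ, Ico (k : ℝ) (k + 1) := by
    simp [Ico_natCast_eq_Ici_inter_floor_preimage, ← inter_iUnion, ← preimage_iUnion,
      iUnion_of_singleton]
  have hdisj : Pairwise (Function.onFun Disjoint fun k : ℕ => Ico (k : ℝ) (k + 1)) := by
    intro i j hij
    simp only [Function.onFun, Ico_natCast_eq_Ici_inter_floor_preimage]
    exact (pairwise_disjoint_fiber _ hij).mono inter_subset_right inter_subset_right
  rw [hcover, lintegral_iUnion (fun _ ↦ measurableSet_Ico) hdisj]
  refine tsum_congr fun k ↦ ?_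
  calc ∫⁻ t in Ico (k : ℝ) (k + 1), a ⌊t⌋₊ = ∫⁻ _ in Ico (k : ℝ) (k + 1), a k :=
        setLIntegral_congr_fun measurableSet_Ico fun t ht ↦ by
          rw [Ico_natCast_eq_Ici_inter_floor_preimage] at ht
          exact congrArg a ht.2
    _ = a k := by simp

theorem upperIntegral_Ici_le_tsum {f : ℝ → ℝ} (a : ℕ → ℝ≥0∞)
    (hfa : ∀ t, 0 ≤ t → ENNReal.ofReal (f t) ≤ a ⌊t⌋₊) :
    upperIntegral f (Ici 0) ≤ ∑' k, a k :=
  setLIntegral_Ici_comp_natFloor a ▸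
    upperIntegral_le_setLIntegral (measurable_from_top.comp Nat.measurable_floor) hfa

theorem rpow_le_pow_natFloor_add_one {C t : ℝ} (hC : 1 ≤ C) :
    C ^ t ≤ C ^ (⌊t⌋₊ + 1) := by
  rw [← Real.rpow_natCast]
  exact Real.rpow_le_rpow_of_exponent_le hC (by push_cast; exact (Nat.lt_floor_add_one t).le)

section Flow

variable {X : Type*} {Φ : ℝ → X → X}

theorem flow_natCast_eq_iterate (hΦ0 : ∀ x, Φ 0 x = x)
    (hΦadd : ∀ t s x, Φ (t + s) x = Φ t (Φ s x)) (k : ℕ) (x : X) :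
    Φ k x = (Φ 1)^[k] x := by
  induction k with
  | zero => simpa using hΦ0 x
  | succ k ih => rw [Nat.cast_succ, add_comm, hΦadd, Function.iterate_succ_apply', ih]

variable [MetricSpace X] [BoundedSpace X] {Ψ : ℝ → X}

theorem dist_le_errFn {t τ : ℝ} (hτ : |τ| ≤ 1) (htτ : 0 ≤ t + τ) :
    dist (Ψ (t + τ)) (Φ τ (Ψ t)) ≤ errFn Φ Ψ t := by
  refine le_ciSup (f := fun τ : {τ : ℝ // |τ| ≤ 1 ∧ 0 ≤ t + τ} ↦ dist (Ψ (t + τ)) (Φ τ (Ψ t)))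
    ⟨Metric.diam (univ : Set X), ?_⟩ ⟨τ, hτ, htτ⟩
  rintro _ ⟨σ, rfl⟩
  exact Metric.dist_le_diam_of_mem (Bornology.IsBounded.all _) trivial trivial

theorem errFn_nonneg {t : ℝ} (ht : 0 ≤ t) : 0 ≤ errFn Φ Ψ t :=
  dist_nonneg.trans (dist_le_errFn (Φ := Φ) (Ψ := Ψ) (τ := 0) (by simp) (by simpa))

theorem dist_flow_add_le {C : ℝ} (hΦadd : ∀ t s x, Φ (t + s) x = Φ t (Φ s x))
    (hLip : ∀ τ : ℝ, |τ| ≤ 1 → ∀ x y : X, dist (Φ τ x) (Φ τ y) ≤ C * dist x y)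
    (p : X) {s τ : ℝ} (hτ0 : 0 ≤ τ) (hτ1 : τ ≤ 1) (hsτ : 0 ≤ s + τ) :
    dist (Φ (s + τ) p) (Ψ (s + τ)) ≤ C * dist (Ψ s) (Φ s p) + errFn Φ Ψ s := by
  have hτ : |τ| ≤ 1 := by rwa [abs_of_nonneg hτ0]
  calc dist (Φ (s + τ) p) (Ψ (s + τ))
      ≤ dist (Φ τ (Φ s p)) (Φ τ (Ψ s)) + dist (Ψ (s + τ)) (Φ τ (Ψ s)) := by
        rw [add_comm s τ, hΦadd, add_comm τ s, dist_comm (Ψ _)]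
        exact dist_triangle _ _ _
    _ ≤ C * dist (Ψ s) (Φ s p) + errFn Φ Ψ s := by
        rw [dist_comm (Ψ s)]
        exact add_le_add (hLip τ hτ _ _) (dist_le_errFn hτ hsτ)

theorem ofReal_weighted_dist_flow_le {C : ℝ} (hC : 1 ≤ C) (hΦ0 : ∀ x, Φ 0 x = x)
    (hΦadd : ∀ t s x, Φ (t + s) x = Φ t (Φ s x))
    (hLip : ∀ τ : ℝ, |τ| ≤ 1 → ∀ x y : X, dist (Φ τ x) (Φ τ y) ≤ C * dist x y)
    (p : X) {t : ℝ} (ht : 0 ≤ t) :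
    ENNReal.ofReal (C ^ t * dist (Φ t p) (Ψ t)) ≤
      ENNReal.ofReal (C ^ 2) * ENNReal.ofReal (C ^ ⌊t⌋₊ * dist (Ψ ⌊t⌋₊) ((Φ 1)^[⌊t⌋₊] p)) +
        ENNReal.ofReal C * ENNReal.ofReal (C ^ ⌊t⌋₊ * errFn Φ Ψ ⌊t⌋₊) := by
  set k := ⌊t⌋₊
  have hC0 : 0 ≤ C := zero_le_one.trans hC
  have herr : 0 ≤ errFn Φ Ψ k := errFn_nonneg k.cast_nonneg
  have hdist : dist (Φ t p) (Ψ t) ≤ C * dist (Ψ k) ((Φ 1)^[k] p) + errFn Φ Ψ k := by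
    have h := dist_flow_add_le (Ψ := Ψ) hΦadd hLip p (s := k) (τ := t - k)
      (by linarith [Nat.floor_le ht]) (by linarith [Nat.lt_floor_add_one t]) (by simpa)
    rwa [add_sub_cancel, flow_natCast_eq_iterate hΦ0 hΦadd] at h
  rw [← ofReal_mul (by positivity), ← ofReal_mul hC0, ← ofReal_add (by positivity) (by positivity)]
  refine ofReal_le_ofReal ?_
  calc C ^ t * dist (Φ t p) (Ψ t)
      ≤ C ^ (k + 1) * (C * dist (Ψ k) ((Φ 1)^[k] p) + errFn Φ Ψ k) :=
        mul_le_mul (rpow_le_pow_natFloor_add_one hC) hdist dist_nonneg (by positivity)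
    _ = C ^ 2 * (C ^ k * dist (Ψ k) ((Φ 1)^[k] p)) + C * (C ^ k * errFn Φ Ψ k) := by ring

theorem tsum_weighted_dist_succ_le_tsum_errFn {C : ℝ} (hC : 0 ≤ C) :
    ∑' k : ℕ, ENNReal.ofReal (C ^ k * dist (Ψ ↑(k + 1)) (Φ 1 (Ψ k))) ≤
      ∑' k : ℕ, ENNReal.ofReal (C ^ k * errFn Φ Ψ k) := by
  refine ENNReal.tsum_le_tsum fun k ↦
    ofReal_le_ofReal (mul_le_mul_of_nonneg_left ?_ (by positivity))
  rw [Nat.cast_succ]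
  exact dist_le_errFn (by norm_num) (by positivity)

end Flow

theorem stmt_7_general (X : Type*) [MetricSpace X] [CompactSpace X]
    (Φ : ℝ → X → X)
    (hΦ0 : ∀ x, Φ 0 x = x)
    (hΦadd : ∀ t s x, Φ (t + s) x = Φ t (Φ s x))
    (C : ℝ) (hC : 1 < C)
    (hLip : ∀ τ : ℝ, |τ| ≤ 1 → ∀ x y : X, dist (Φ τ x) (Φ τ y) ≤ C * dist x y)
    (L₀ d₀ : ℝ) (hL₀ : 0 < L₀)
    (hdisc : ∀ d : ℝ, 0 < d → d ≤ d₀ → ∀ x : ℕ → X,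
      (∑' k : ℕ, ENNReal.ofReal (C ^ k * dist (x (k + 1)) (Φ 1 (x k)))) ≤ ENNReal.ofReal d →
      ∃ q : X,
        (∑' k : ℕ, ENNReal.ofReal (C ^ k * dist (x k) ((Φ 1)^[k] q))) ≤
          ENNReal.ofReal (L₀ * d)) :
    ∃ L : ℝ, 0 < L ∧
      ∀ d : ℝ, 0 < d → d ≤ d₀ → ∀ Ψ : ℝ → X,
        (∀ t : ℝ, 0 ≤ t → errFn Φ Ψ t ≤ d) →
        (∑' k : ℕ, ENNReal.ofReal (C ^ k * errFn Φ Ψ k)) ≤ ENNReal.ofReal d →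
        ∃ p : X,
          upperIntegral (fun t => C ^ t * dist (Φ t p) (Ψ t)) (Set.Ici 0) ≤
            ENNReal.ofReal (L * d) := by
  have hC0 : 0 ≤ C := zero_le_one.trans hC.le
  refine ⟨C ^ 2 * L₀ + C, by positivity, fun d hd hdd₀ Ψ _ hψ ↦ ?_⟩
  obtain ⟨q, hq⟩ := hdisc d hd hdd₀ (fun k ↦ Ψ k)
    ((tsum_weighted_dist_succ_le_tsum_errFn hC0).trans hψ)
  refine ⟨q, ?_⟩
  calc upperIntegral (fun t ↦ C ^ t * dist (Φ t q) (Ψ t)) (Ici 0)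
      ≤ ∑' k : ℕ, (ENNReal.ofReal (C ^ 2) * ENNReal.ofReal (C ^ k * dist (Ψ k) ((Φ 1)^[k] q)) +
          ENNReal.ofReal C * ENNReal.ofReal (C ^ k * errFn Φ Ψ k)) :=
        upperIntegral_Ici_le_tsum _ fun _ ht ↦
          ofReal_weighted_dist_flow_le hC.le hΦ0 hΦadd hLip q ht
    _ = ENNReal.ofReal (C ^ 2) * ∑' k : ℕ, ENNReal.ofReal (C ^ k * dist (Ψ k) ((Φ 1)^[k] q)) +
          ENNReal.ofReal C * ∑' k : ℕ, ENNReal.ofReal (C ^ k * errFn Φ Ψ k) := by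
        rw [ENNReal.tsum_add, ENNReal.tsum_mul_left, ENNReal.tsum_mul_left]
    _ ≤ ENNReal.ofReal (C ^ 2) * ENNReal.ofReal (L₀ * d) + ENNReal.ofReal C * ENNReal.ofReal d := by
        gcongr
    _ = ENNReal.ofReal ((C ^ 2 * L₀ + C) * d) := by
        rw [← ofReal_mul (by positivity), ← ofReal_mul hC0,
          ← ofReal_add (by positivity) (by positivity)]
        ring_nf

/-- Weighted shadowing for flows on a compact metric space (the paper's Theorem 7), with the
discrete-time weighted shadowing property of the time-one map taken as a hypothesis. -/
theorem stmt_7 (X : Type*) [MetricSpace X] [CompactSpace X]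
    (Φ : ℝ → X → X)
    (hΦc : Continuous fun p : ℝ × X => Φ p.1 p.2)
    (hΦ0 : ∀ x, Φ 0 x = x)
    (hΦadd : ∀ t s x, Φ (t + s) x = Φ t (Φ s x))
    (C : ℝ) (hC : 1 < C)
    (hLip : ∀ τ : ℝ, |τ| ≤ 1 → ∀ x y : X, dist (Φ τ x) (Φ τ y) ≤ C * dist x y)
    (L₀ d₀ : ℝ) (hL₀ : 0 < L₀) (hd₀ : 0 < d₀)
    (hdisc : ∀ d : ℝ, 0 < d → d ≤ d₀ → ∀ x : ℕ → X,
      (∑' k : ℕ, ENNReal.ofReal (C ^ k * dist (x (k + 1)) (Φ 1 (x k)))) ≤ ENNReal.ofReal d →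
      ∃ q : X,
        (∑' k : ℕ, ENNReal.ofReal (C ^ k * dist (x k) ((Φ 1)^[k] q))) ≤
          ENNReal.ofReal (L₀ * d)) :
    ∃ L : ℝ, 0 < L ∧
      ∀ d : ℝ, 0 < d → d ≤ d₀ → ∀ Ψ : ℝ → X,
        (∀ t : ℝ, 0 ≤ t → errFn Φ Ψ t ≤ d) →
        (∑' k : ℕ, ENNReal.ofReal (C ^ k * errFn Φ Ψ k)) ≤ ENNReal.ofReal d →
        ∃ p : X,
          upperIntegral (fun t => C ^ t * dist (Φ t p) (Ψ t)) (Set.Ici 0) ≤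
            ENNReal.ofReal (L * d) :=
  stmt_7_general X Φ hΦ0 hΦadd C hC hLip L₀ d₀ hL₀ hdisc
end

section
/- Let N ≥ 1 and let Θ : ℝ^N → ℝ^N be defined by Θ(x) = x/√(|x|² + 1). Then for every x ∈ ℝ^N with |x| ≥ 1, one has 1/(4|x|²) ≤ 1 − |Θ(x)| ≤ 1/(2|x|²); moreover the upper bound 1 − |Θ(x)| ≤ 1/(2|x|²) holds for all x ≠ 0. -/
/-- The Poincaré compactification map `Θ(x) = x / √(|x|² + 1)`. -/
noncomputable def Theta {N : ℕ} (x : EuclideanSpace ℝ (Fin N)) : EuclideanSpace ℝ (Fin N) :=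
  (Real.sqrt (‖x‖ ^ 2 + 1))⁻¹ • x

lemma norm_Theta {N : ℕ} (x : EuclideanSpace ℝ (Fin N)) :
    ‖Theta x‖ = ‖x‖ / Real.sqrt (‖x‖ ^ 2 + 1) := by
  have h : (0:ℝ) ≤ Real.sqrt (‖x‖ ^ 2 + 1) := Real.sqrt_nonneg _
  rw [Theta, norm_smul, norm_inv, Real.norm_eq_abs, abs_of_nonneg h, inv_mul_eq_div]

lemma key (r : ℝ) (hr : 0 < r) : 1 - r / Real.sqrt (r ^ 2 + 1) ≤ 1 / (2 * r ^ 2) := by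
  set s := Real.sqrt (r ^ 2 + 1) with hs
  have hs2 : s ^ 2 = r ^ 2 + 1 := Real.sq_sqrt (by positivity)
  have hsp : 0 < s := Real.sqrt_pos.mpr (by positivity)
  have hsr : r ≤ s := by nlinarith
  have heq : 1 - r / s = (s - r) / s := by field_simp
  rw [heq, div_le_div_iff₀ hsp (by positivity)]
  nlinarith [mul_le_mul_of_nonneg_left hsr hr.le, mul_pos hr hsp]

/-- The compactification estimate: `1 − |Θ(x)|` is of the exact order `1/|x|²`. -/
theorem stmt_12 (N : ℕ) (hN : 1 ≤ N) :
    (∀ x : EuclideanSpace ℝ (Fin N), 1 ≤ ‖x‖ →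
      1 / (4 * ‖x‖ ^ 2) ≤ 1 - ‖Theta x‖ ∧ 1 - ‖Theta x‖ ≤ 1 / (2 * ‖x‖ ^ 2)) ∧
    (∀ x : EuclideanSpace ℝ (Fin N), x ≠ 0 → 1 - ‖Theta x‖ ≤ 1 / (2 * ‖x‖ ^ 2)) := by
  constructor
  · intro x hx
    have hr : (0:ℝ) < ‖x‖ := lt_of_lt_of_le one_pos hx
    rw [norm_Theta]
    refine ⟨?_, key ‖x‖ hr⟩
    set r := ‖x‖ with hrdef
    set s := Real.sqrt (r ^ 2 + 1) with hs
    have hs2 : s ^ 2 = r ^ 2 + 1 := Real.sq_sqrt (by positivity)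
    have hsp : 0 < s := Real.sqrt_pos.mpr (by positivity)
    have hsle : s ≤ r * Real.sqrt 2 := by
      rw [hs]
      have : r ^ 2 + 1 ≤ 2 * r ^ 2 := by nlinarith
      calc Real.sqrt (r ^ 2 + 1) ≤ Real.sqrt (2 * r ^ 2) := Real.sqrt_le_sqrt this
        _ = r * Real.sqrt 2 := by
            rw [show 2 * r ^ 2 = (r * Real.sqrt 2) ^ 2 by
              rw [mul_pow, Real.sq_sqrt (by norm_num)]; ring]
            exact Real.sqrt_sq (by positivity)
    have h2 : Real.sqrt 2 ≤ 1.5 := by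
      rw [show (1.5:ℝ) = Real.sqrt (1.5 ^ 2) from (Real.sqrt_sq (by norm_num)).symm]
      exact Real.sqrt_le_sqrt (by norm_num)
    have hle : s ≤ 1.5 * r := by nlinarith
    have heq : 1 - r / s = (s - r) / s := by field_simp
    rw [heq, div_le_div_iff₀ (by positivity) hsp]
    nlinarith [mul_le_mul_of_nonneg_left hle hr.le]
  · intro x hx
    rw [norm_Theta]
    exact key ‖x‖ (norm_pos_iff.mpr hx)
end

section
/- Let N ≥ 1 and let Θ : ℝ^N → ℝ^N be defined by Θ(x) = x/√(|x|² + 1). There exists an absolute constant K > 0 such that for every x ∈ ℝ^N, every R̄ with 0 < R̄ ≤ (1 − |Θ(x)|)/2, and every y ∈ ℝ^N: if |Θ(y) − Θ(x)| ≤ R̄, then |y − x| ≤ K·R̄·(1 + |x|)³. -/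
set_option maxHeartbeats 800000


/-- Pure real-arithmetic core of the decompactification estimate. -/
lemma stmt_13_aux (c d nu nv Rb E Y : ℝ)
    (hc1 : 1 ≤ c) (hd1 : 1 ≤ d) (hnu0 : 0 ≤ nu) (hnv0 : 0 ≤ nv)
    (hcv : c ^ 2 * (1 - nv ^ 2) = 1) (hdu : d ^ 2 * (1 - nu ^ 2) = 1)
    (hR : 0 < Rb) (hR2 : Rb ≤ (1 - nv) / 2)
    (hE0 : 0 ≤ E) (hE : E ≤ Rb) (habs : |nu - nv| ≤ E)
    (hY : Y ≤ d * E + |d - c| * nv) : Y ≤ 16 * Rb * c ^ 3 := by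
  have hc0 : (0:ℝ) < c := by linarith
  have hd0 : (0:ℝ) < d := by linarith
  have hnv1 : nv < 1 := by
    by_contra h
    push_neg at h
    have h1 : 1 - nv ^ 2 ≤ 0 := by nlinarith
    have h2 : c ^ 2 * (1 - nv ^ 2) ≤ 0 := mul_nonpos_of_nonneg_of_nonpos (sq_nonneg c) h1
    linarith
  have hnu1 : nu < 1 := by
    by_contra h
    push_neg at h
    have h1 : 1 - nu ^ 2 ≤ 0 := by nlinarith
    have h2 : d ^ 2 * (1 - nu ^ 2) ≤ 0 := mul_nonpos_of_nonneg_of_nonpos (sq_nonneg d) h1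
    linarith
  have habsR : |nu - nv| ≤ Rb := habs.trans hE
  have hnunv : nu ≤ nv + Rb := by
    have := abs_le.mp habsR
    linarith [this.2]
  have h1 : (1 - nv) / 2 ≤ 1 - nu := by linarith
  have h2 : (1 - nv ^ 2) / 4 ≤ 1 - nu ^ 2 := by
    nlinarith [sq_nonneg (1 - nv), mul_nonneg hnu0 (by linarith : (0:ℝ) ≤ 1 - nu)]
  have h3 : d ^ 2 ≤ 4 * c ^ 2 := by
    have ha := mul_le_mul_of_nonneg_left h2 (sq_nonneg d)
    have hb := mul_le_mul_of_nonneg_left ha (sq_nonneg c)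
    nlinarith
  have hd2c : d ≤ 2 * c := by nlinarith
  have hkey : d ^ 2 - c ^ 2 = c ^ 2 * d ^ 2 * (nu ^ 2 - nv ^ 2) := by
    linear_combination c ^ 2 * hdu - d ^ 2 * hcv
  have habs2 : |d ^ 2 - c ^ 2| ≤ 8 * Rb * c ^ 4 := by
    rw [hkey, abs_mul]
    have hs : |nu ^ 2 - nv ^ 2| ≤ 2 * Rb := by
      have e : nu ^ 2 - nv ^ 2 = (nu - nv) * (nu + nv) := by ring
      rw [e, abs_mul]
      have hb1 : |nu + nv| ≤ 2 := by rw [abs_of_nonneg (by linarith)]; linarith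
      calc |nu - nv| * |nu + nv| ≤ Rb * 2 :=
            mul_le_mul habsR hb1 (abs_nonneg _) hR.le
        _ = 2 * Rb := by ring
    have hcd : |c ^ 2 * d ^ 2| ≤ 4 * c ^ 4 := by
      rw [abs_of_nonneg (by positivity)]
      nlinarith
    calc |c ^ 2 * d ^ 2| * |nu ^ 2 - nv ^ 2| ≤ (4 * c ^ 4) * (2 * Rb) :=
          mul_le_mul hcd hs (abs_nonneg _) (by positivity)
      _ = 8 * Rb * c ^ 4 := by ring
  have hdc : |d - c| ≤ 8 * c ^ 3 * Rb := by
    have hsum : (0:ℝ) < d + c := by linarith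
    have e : |d - c| * (d + c) = |d ^ 2 - c ^ 2| := by
      rw [← abs_of_pos hsum, ← abs_mul]; ring_nf
    have h4 : |d - c| * c ≤ |d - c| * (d + c) :=
      mul_le_mul_of_nonneg_left (by linarith) (abs_nonneg _)
    have h5 : |d - c| * c ≤ (8 * c ^ 3 * Rb) * c := by
      rw [e] at h4
      calc |d - c| * c ≤ 8 * Rb * c ^ 4 := h4.trans habs2
        _ = (8 * c ^ 3 * Rb) * c := by ring
    exact le_of_mul_le_mul_right h5 hc0
  have hnvle : |d - c| * nv ≤ |d - c| := by
    have := mul_le_mul_of_nonneg_left hnv1.le (abs_nonneg (d - c))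
    simpa using this
  have hcc : c ≤ c ^ 3 := by
    have hp : 0 ≤ c * (c - 1) * (c + 1) :=
      mul_nonneg (mul_nonneg hc0.le (by linarith)) (by linarith)
    have hp2 : c * (c - 1) * (c + 1) = c ^ 3 - c := by ring
    linarith
  have t1 : d * E ≤ 2 * c * Rb := by
    have := mul_le_mul hd2c hE hE0 (by linarith : (0:ℝ) ≤ 2 * c)
    linarith
  have t2 : c * Rb ≤ c ^ 3 * Rb := mul_le_mul_of_nonneg_right hcc hR.le
  have hpos : 0 ≤ c ^ 3 * Rb := by positivity
  have hdcnv : |d - c| * nv ≤ 8 * c ^ 3 * Rb :=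
    hnvle.trans hdc
  linarith

/-- The decompactification estimate: a ball of radius `R̄` around `Θ(x)` not meeting the
boundary sphere pulls back under `Θ⁻¹` into a ball of radius `O(R̄·|x|³)` around `x`. -/
theorem stmt_13 (N : ℕ) (hN : 1 ≤ N) :
    ∃ K : ℝ, 0 < K ∧
      ∀ (x : EuclideanSpace ℝ (Fin N)) (Rb : ℝ) (y : EuclideanSpace ℝ (Fin N)),
        0 < Rb → Rb ≤ (1 - ‖Theta x‖) / 2 → ‖Theta y - Theta x‖ ≤ Rb →
          ‖y - x‖ ≤ K * Rb * (1 + ‖x‖) ^ 3 := by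
  refine ⟨16, by norm_num, ?_⟩
  intro x Rb y hR hR2 hdist
  set c : ℝ := Real.sqrt (‖x‖ ^ 2 + 1) with hcdef
  set d : ℝ := Real.sqrt (‖y‖ ^ 2 + 1) with hddef
  have hc2 : c ^ 2 = ‖x‖ ^ 2 + 1 := Real.sq_sqrt (by positivity)
  have hd2 : d ^ 2 = ‖y‖ ^ 2 + 1 := Real.sq_sqrt (by positivity)
  have hc0 : 0 ≤ c := Real.sqrt_nonneg _
  have hd0 : 0 ≤ d := Real.sqrt_nonneg _
  have hc1 : 1 ≤ c := by nlinarith [norm_nonneg x, sq_nonneg ‖x‖]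
  have hd1 : 1 ≤ d := by nlinarith [norm_nonneg y, sq_nonneg ‖y‖]
  have hcne : c ≠ 0 := by positivity
  have hdne : d ≠ 0 := by positivity
  have hx : x = c • Theta x := by
    rw [Theta, smul_smul, ← hcdef, mul_inv_cancel₀ hcne, one_smul]
  have hy : y = d • Theta y := by
    rw [Theta, smul_smul, ← hddef, mul_inv_cancel₀ hdne, one_smul]
  set u : EuclideanSpace ℝ (Fin N) := Theta y with hudef
  set v : EuclideanSpace ℝ (Fin N) := Theta x with hvdef
  have hxnorm : ‖x‖ = c * ‖v‖ := by
    rw [hx, norm_smul, Real.norm_eq_abs, abs_of_nonneg hc0]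
  have hynorm : ‖y‖ = d * ‖u‖ := by
    rw [hy, norm_smul, Real.norm_eq_abs, abs_of_nonneg hd0]
  have hcv : c ^ 2 * (1 - ‖v‖ ^ 2) = 1 := by
    have h : ‖x‖ ^ 2 = c ^ 2 * ‖v‖ ^ 2 := by rw [hxnorm]; ring
    linear_combination hc2 + h
  have hdu : d ^ 2 * (1 - ‖u‖ ^ 2) = 1 := by
    have h : ‖y‖ ^ 2 = d ^ 2 * ‖u‖ ^ 2 := by rw [hynorm]; ring
    linear_combination hd2 + h
  have habs : |‖u‖ - ‖v‖| ≤ ‖u - v‖ := abs_norm_sub_norm_le u v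
  have hsplit : y - x = d • (u - v) + (d - c) • v := by
    rw [hx, hy, smul_sub, sub_smul]; abel
  have hY : ‖y - x‖ ≤ d * ‖u - v‖ + |d - c| * ‖v‖ := by
    calc ‖y - x‖ ≤ ‖d • (u - v)‖ + ‖(d - c) • v‖ := by rw [hsplit]; exact norm_add_le _ _
      _ = d * ‖u - v‖ + |d - c| * ‖v‖ := by
          rw [norm_smul, norm_smul, Real.norm_eq_abs, Real.norm_eq_abs, abs_of_nonneg hd0]
  have hcore : ‖y - x‖ ≤ 16 * Rb * c ^ 3 :=
    stmt_13_aux c d ‖u‖ ‖v‖ Rb ‖u - v‖ ‖y - x‖ hc1 hd1 (norm_nonneg u) (norm_nonneg v)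
      hcv hdu hR hR2 (norm_nonneg _) hdist habs hY
  have hcx : c ≤ 1 + ‖x‖ := by nlinarith [norm_nonneg x]
  have hc3 : c ^ 3 ≤ (1 + ‖x‖) ^ 3 := pow_le_pow_left₀ hc0 hcx 3
  calc ‖y - x‖ ≤ 16 * Rb * c ^ 3 := hcore
    _ ≤ 16 * Rb * (1 + ‖x‖) ^ 3 := mul_le_mul_of_nonneg_left hc3 (by positivity)
end
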